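/- Let α > −1 and n ∈ ℕ with n ≥ 3, and suppose L_n^{(α+4)} and L_n^{(α)} have no common zeros. Let 0 < x_1 < ⋯ < x_n be the zeros of L_n^{(α)} and 0 < w_1 < ⋯ < w_n the zeros of L_n^{(α+4)}. Let p_3(x) = (x + α + 3)(x + α + 2)(x + α + 1) − x(x + α + 1)(α + n + 3) − x(x + α + 3)(α + n + 2). If, over ℂ, p_3 has one real zero l_1 with l_1 < w_1 and its remaining two zeros are each either negative real numbers or have nonzero imaginary part, then the zeros of L_n^{(α+4)} and L_n^{(α)} interlace: x_1 < w_1 < x_2 < w_2 < ⋯ < x_n < w_n. -/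

import Mathlib

/-!
Iterating the contiguous relations `L_{n+1}^{(β)} = L_{n+1}^{(β+1)} - L_n^{(β+1)}` and
`x L_n^{(β+1)} = (n+1+β) L_n^{(β)} - (n+1) L_{n+1}^{(β)}` four times expresses
`(n+α+1)(n+α+2)(n+α+3) L_n^{(α)}` as `A L_n^{(α+4)} - p₃ L_{n-1}^{(α+4)}` with `A` quadratic.
Together with `x (L_n^{(α+4)})' = n L_n^{(α+4)} - (n+α+4) L_{n-1}^{(α+4)}` this makes
`L_n^{(α)}(w_k)` a positive multiple of `(L_n^{(α+4)})'(w_k)`, because `p₃ > 0` to the right of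
`l₁` and of `0`. So `L_n^{(α)}` has the sign of `(L_n^{(α+4)})'` at every `w_k`: the number of
`x_i` above `w_k` has the parity of `n - k`. Being non-increasing in `k` and less than `n` at
`k = 1`, it equals `n - k`, which is the interlacing.
-/

open Polynomial

/-- The generalized Laguerre polynomial `L_n^{(α)}(x) =
∑_{k=0}^{n} (−1)^k [∏_{j=k+1}^{n}(α+j)] / ((n−k)!·k!) · x^k`. -/
noncomputable def laguerre (α : ℝ) (n : ℕ) : Polynomial ℝ :=
  ∑ k ∈ Finset.range (n + 1),
    Polynomial.C ((-1 : ℝ) ^ k * (∏ j ∈ Finset.Icc (k + 1) n, (α + (j : ℝ))) /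
      ((n - k).factorial * k.factorial)) * Polynomial.X ^ k

open Finset Nat

theorem coeff_X_mul_derivative {R : Type*} [CommSemiring R] (p : R[X]) (k : ℕ) :
    (X * derivative p).coeff k = k * p.coeff k := by
  rcases k with _ | k
  · simp
  · rw [coeff_X_mul, coeff_derivative]
    push_cast
    ring

theorem eq_C_leadingCoeff_mul_prod_X_sub_C {R ι : Type*} [CommRing R] [IsDomain R] {p : R[X]}
    {s : Finset ι} {r : ι → R} (hp : p ≠ 0) (hr : Set.InjOn r s)
    (hroot : ∀ i ∈ s, p.IsRoot (r i)) (hcard : #s = p.natDegree) :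
    p = C p.leadingCoeff * ∏ i ∈ s, (X - C (r i)) := by
  have hnodup : (s.val.map r).Nodup := s.nodup.map_on fun i hi j hj h => hr hi hj h
  have hle : s.val.map r ≤ p.roots := (Multiset.le_iff_subset hnodup).2 fun a ha => by
    obtain ⟨i, hi, rfl⟩ := Multiset.mem_map.1 ha
    exact (mem_roots hp).2 (hroot i hi)
  have hroots : s.val.map r = p.roots :=
    Multiset.eq_of_le_of_card_le hle (by simpa [hcard] using p.card_roots')
  conv_lhs =>
    rw [← C_leadingCoeff_mul_prod_multiset_X_sub_C (p := p) (by rw [← hroots]; simpa using hcard)]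
  rw [← hroots, Multiset.map_map]
  rfl

theorem eval_derivative_prod_X_sub_C {R ι : Type*} [CommRing R] [DecidableEq ι] {s : Finset ι}
    {r : ι → R} {k : ι} (hk : k ∈ s) :
    (derivative (∏ i ∈ s, (X - C (r i)))).eval (r k) = ∏ i ∈ s.erase k, (r k - r i) := by
  rw [← mul_prod_erase s _ hk, derivative_mul]
  simp [eval_prod]

section OrderedRing

variable {R : Type*} [CommRing R] [LinearOrder R] [IsStrictOrderedRing R]

theorem neg_one_pow_card_mul_prod_sub_pos {ι : Type*} (s : Finset ι) {f : ι → R} {t : R}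
    (hf : ∀ i ∈ s, f i ≠ t) :
    0 < (-1) ^ #{i ∈ s | t < f i} * ∏ i ∈ s, (t - f i) := by
  have hsign : (-1) ^ #{i ∈ s | t < f i} * ∏ i ∈ s, (t - f i) =
      ∏ i ∈ s, (if t < f i then -1 else 1) * (t - f i) := by
    rw [prod_mul_distrib, prod_ite, prod_const, prod_const_one, mul_one]
  rw [hsign]
  refine prod_pos fun i hi => ?_
  split_ifs with h
  · linarith
  · linarith [lt_of_le_of_ne (not_lt.1 h) (hf i hi)]

theorem even_add_of_neg_one_pow_mul_pos {a b : ℕ} {u v : R} (hu : 0 < (-1) ^ a * u)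
    (hv : 0 < (-1) ^ b * v) (huv : 0 < u * v) : Even (a + b) := by
  by_contra hodd
  have := mul_pos hu hv
  rw [show (-1) ^ a * u * ((-1) ^ b * v) = (-1) ^ (a + b) * (u * v) by ring,
    (Nat.not_even_iff_odd.1 hodd).neg_one_pow] at this
  linarith

theorem eq_sub_of_antitoneOn_of_even {n : ℕ} {N : ℕ → ℕ} (hanti : AntitoneOn N (Icc 1 n))
    (hle : N 1 ≤ n) (heven : ∀ k ∈ Icc 1 n, Even (N k + (n - k))) :
    ∀ k ∈ Icc 1 n, N k = n - k := by
  intro k hk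
  have hk' := mem_Icc.1 hk
  have hmem₁ : 1 ∈ Icc 1 n := mem_Icc.2 ⟨le_rfl, hk'.1.trans hk'.2⟩
  have hmemₙ : n ∈ Icc 1 n := mem_Icc.2 ⟨hk'.1.trans hk'.2, le_rfl⟩
  -- By parity `N` drops by at least one at each step, so `N k + k` is antitone; it is at most `n`
  -- at `k = 1` and at least `n` at `k = n`.
  have hM : AntitoneOn (fun k => N k + k) (Icc 1 n) :=
    antitoneOn_of_add_one_le (by rw [coe_Icc]; exact Set.ordConnected_Icc) fun a _ ha ha' => by
      have hdrop := hanti ha ha' a.le_succ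
      obtain ⟨c, hc⟩ := heven a ha
      obtain ⟨d, hd⟩ := heven (a + 1) ha'
      have := (mem_Icc.1 ha').2
      omega
  have h₁ : N 1 + 1 ≤ n := by
    obtain ⟨c, hc⟩ := heven 1 hmem₁
    omega
  have hM₁ := hM hmem₁ hk hk'.1
  have hMₙ := hM hk hmemₙ hk'.2
  dsimp only at hM₁ hMₙ
  omega

theorem le_and_lt_succ_of_card_filter_lt_eq {α : Type*} [LinearOrder α] {n k : ℕ} {x : ℕ → α}
    {t : α} (hx : StrictMonoOn x (Icc 1 n)) (hk : k ∈ Icc 1 n)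
    (hcard : #{i ∈ Icc 1 n | t < x i} = n - k) :
    x k ≤ t ∧ (k < n → t < x (k + 1)) := by
  obtain ⟨hk1, hkn⟩ := mem_Icc.1 hk
  constructor
  · by_contra! hlt
    have hsub : Icc k n ⊆ {i ∈ Icc 1 n | t < x i} := fun j hj => by
      obtain ⟨hkj, hjn⟩ := mem_Icc.1 hj
      have hj' : j ∈ Icc 1 n := mem_Icc.2 ⟨hk1.trans hkj, hjn⟩
      exact mem_filter.2 ⟨hj', hlt.trans_le ((hx.le_iff_le hk hj').2 hkj)⟩
    have := card_le_card hsub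
    rw [Nat.card_Icc] at this
    omega
  · intro hkn'
    by_contra! hle
    have hk' : k + 1 ∈ Icc 1 n := mem_Icc.2 ⟨by omega, hkn'⟩
    have hsub : {i ∈ Icc 1 n | t < x i} ⊆ Icc (k + 2) n := fun j hj => by
      obtain ⟨hj, htj⟩ := mem_filter.1 hj
      refine mem_Icc.2 ⟨?_, (mem_Icc.1 hj).2⟩
      by_contra! hjk
      exact (htj.trans_le (((hx.le_iff_le hj hk').2 (by omega)).trans hle)).false
    have := card_le_card hsub
    rw [Nat.card_Icc] at this
    omega

theorem card_filter_erase_lt_eq {α : Type*} [LinearOrder α] {n k : ℕ} {w : ℕ → α}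
    (hw : StrictMonoOn w (Icc 1 n)) (hk : k ∈ Icc 1 n) :
    #{i ∈ (Icc 1 n).erase k | w k < w i} = n - k := by
  have : {i ∈ (Icc 1 n).erase k | w k < w i} = Ioc k n := by
    ext i
    simp only [mem_filter, mem_erase, mem_Icc, mem_Ioc]
    constructor
    · rintro ⟨⟨-, hi⟩, hlt⟩
      exact ⟨(hw.lt_iff_lt hk (mem_Icc.2 hi)).1 hlt, hi.2⟩
    · rintro ⟨hki, hin⟩
      have hi : i ∈ Icc 1 n := mem_Icc.2 ⟨(mem_Icc.1 hk).1.trans hki.le, hin⟩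
      exact ⟨⟨hki.ne', mem_Icc.1 hi⟩, hw hk hi hki⟩
  rw [this, Nat.card_Ioc]

theorem interlace_of_prod_mul_prod_pos {n : ℕ} {x w : ℕ → R} (hx : StrictMonoOn x (Icc 1 n))
    (hw : StrictMonoOn w (Icc 1 n))
    (hpos : ∀ k ∈ Icc 1 n,
      0 < (∏ i ∈ Icc 1 n, (w k - x i)) * ∏ i ∈ (Icc 1 n).erase k, (w k - w i)) :
    ∀ k ∈ Icc 1 n, x k < w k ∧ (k < n → w k < x (k + 1)) := by
  have hne : ∀ k ∈ Icc 1 n, ∀ i ∈ Icc 1 n, x i ≠ w k := fun k hk i hi heq => by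
    have := hpos k hk
    rw [prod_eq_zero hi (by rw [heq, sub_self]), zero_mul] at this
    exact this.false
  set N : ℕ → ℕ := fun k => #{i ∈ Icc 1 n | w k < x i}
  have heven : ∀ k ∈ Icc 1 n, Even (N k + (n - k)) := fun k hk => by
    refine even_add_of_neg_one_pow_mul_pos (neg_one_pow_card_mul_prod_sub_pos _ (hne k hk)) ?_
      (hpos k hk)
    rw [← card_filter_erase_lt_eq hw hk]
    exact neg_one_pow_card_mul_prod_sub_pos _ fun i hi =>
      hw.injOn.ne (mem_of_mem_erase hi) hk (ne_of_mem_erase hi)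
  have hanti : AntitoneOn N (Icc 1 n) := fun a ha b hb hab =>
    card_le_card (monotone_filter_right _ fun i _ hi => (hw.monotoneOn ha hb hab).trans_lt hi)
  have hN₁ : N 1 ≤ n := (card_filter_le _ _).trans (by simp)
  intro k hk
  obtain ⟨hle, hlt⟩ := le_and_lt_succ_of_card_filter_lt_eq hx hk
    (eq_sub_of_antitoneOn_of_even hanti hN₁ heven k hk)
  exact ⟨hle.lt_of_ne (hne k hk k hk), hlt⟩

theorem interlace_of_eval_eq_pos_mul_eval_derivative {n : ℕ} {x w : ℕ → R} {P Q : R[X]} {a : R}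
    (hx : StrictMonoOn x (Icc 1 n)) (hw : StrictMonoOn w (Icc 1 n)) (ha : a ≠ 0)
    (hP : P = C a * ∏ i ∈ Icc 1 n, (X - C (x i))) (hQ : Q = C a * ∏ i ∈ Icc 1 n, (X - C (w i)))
    (hsign : ∀ k ∈ Icc 1 n, ∃ κ > 0, P.eval (w k) = κ * (derivative Q).eval (w k)) :
    ∀ k ∈ Icc 1 n, x k < w k ∧ (k < n → w k < x (k + 1)) := by
  refine interlace_of_prod_mul_prod_pos hx hw fun k hk => ?_
  obtain ⟨κ, hκ, hPQ⟩ := hsign k hk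
  rw [hP, hQ, derivative_C_mul, eval_mul, eval_mul, eval_C, eval_prod,
    eval_derivative_prod_X_sub_C hk, mul_left_comm, mul_right_inj' ha] at hPQ
  simp only [eval_sub, eval_X, eval_C] at hPQ
  have hsimple : ∏ i ∈ (Icc 1 n).erase k, (w k - w i) ≠ 0 := prod_ne_zero_iff.2 fun i hi =>
    sub_ne_zero.2 (hw.injOn.ne hk (mem_of_mem_erase hi) (ne_of_mem_erase hi).symm)
  rw [hPQ, mul_assoc, ← sq]
  exact mul_pos hκ (pow_two_pos_of_ne_zero hsimple)

end OrderedRing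

theorem im_sum_eq_zero_of_forall_im_prod_sub_eq_zero {l₁ l₂ l₃ : ℂ}
    (h : ∀ s : ℝ, ((s - l₁) * (s - l₂) * (s - l₃)).im = 0) :
    (l₁ + l₂ + l₃).im = 0 ∧ (l₁ * l₂ + l₁ * l₃ + l₂ * l₃).im = 0 := by
  have him : ∀ s : ℝ, ((s - l₁) * (s - l₂) * (s - l₃)).im =
      s * (l₁ * l₂ + l₁ * l₃ + l₂ * l₃).im - s ^ 2 * (l₁ + l₂ + l₃).im - (l₁ * l₂ * l₃).im := by
    intro s
    rw [show ((s - l₁) * (s - l₂) * (s - l₃) : ℂ) = (s : ℂ) ^ 3 - (s : ℂ) ^ 2 * (l₁ + l₂ + l₃) +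
      s * (l₁ * l₂ + l₁ * l₃ + l₂ * l₃) - l₁ * l₂ * l₃ by ring]
    simp [← Complex.ofReal_pow]
    ring
  have h₀ := h 0
  have h₁ := h 1
  have h₂ := h (-1)
  rw [him] at h₀ h₁ h₂
  constructor <;> linarith

theorem pos_of_ofReal_eq_prod_sub {f : ℝ → ℝ} {l₁ l₂ l₃ : ℂ}
    (hf : ∀ s : ℝ, (f s : ℂ) = (s - l₁) * (s - l₂) * (s - l₃))
    (h₁ : l₁.im = 0) (h₂ : (l₂.im = 0 ∧ l₂.re < 0) ∨ l₂.im ≠ 0)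
    (h₃ : (l₃.im = 0 ∧ l₃.re < 0) ∨ l₃.im ≠ 0) {t : ℝ} (ht₁ : l₁.re < t) (ht₀ : 0 ≤ t) :
    0 < f t := by
  obtain ⟨hsum, hpair⟩ := im_sum_eq_zero_of_forall_im_prod_sub_eq_zero fun s => by
    rw [← hf, Complex.ofReal_im]
  rw [← Complex.ofReal_re (f t), hf]
  obtain ⟨a₁, b₁⟩ := l₁
  obtain ⟨a₂, b₂⟩ := l₂
  obtain ⟨a₃, b₃⟩ := l₃
  simp only [Complex.add_im, Complex.mul_im] at hsum hpair h₁ h₂ h₃ ht₁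
  subst h₁
  simp only [Complex.mul_re, Complex.mul_im, Complex.sub_re, Complex.sub_im, Complex.ofReal_re,
    Complex.ofReal_im]
  -- The symmetric functions of the roots being real, `l₂` and `l₃` are both real or conjugate.
  by_cases hreal : b₂ = 0
  · subst hreal
    obtain ⟨-, ha₂⟩ := h₂.resolve_right (not_not.2 rfl)
    have hb₃ : b₃ = 0 := by linarith
    subst hb₃
    obtain ⟨-, ha₃⟩ := h₃.resolve_right (not_not.2 rfl)
    refine (mul_pos (mul_pos (sub_pos.2 ht₁) (by linarith : 0 < t - a₂))
      (by linarith : 0 < t - a₃)).trans_eq ?_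
    ring
  · have hb₃ : b₃ = -b₂ := by linarith
    subst hb₃
    have ha₃ : a₃ = a₂ := by
      have : b₂ * (a₃ - a₂) = 0 := by linear_combination hpair
      exact (sub_eq_zero.1 ((mul_eq_zero.1 this).resolve_left hreal))
    subst ha₃
    refine (mul_pos (sub_pos.2 ht₁)
      (add_pos_of_nonneg_of_pos (sq_nonneg (t - a₃)) (pow_two_pos_of_ne_zero hreal))).trans_eq ?_
    ring

theorem coeff_laguerre (α : ℝ) (n k : ℕ) :
    (laguerre α n).coeff k = if k ≤ n then
      (-1) ^ k * (∏ j ∈ Icc (k + 1) n, (α + j)) / ((n - k)! * k !) else 0 := by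
  simp only [laguerre, finsetSum_coeff, coeff_C_mul, coeff_X_pow, mul_ite, mul_one, mul_zero,
    sum_ite_eq, mem_range, Nat.lt_succ_iff]

theorem coeff_laguerre_of_lt {α : ℝ} {n k : ℕ} (h : n < k) : (laguerre α n).coeff k = 0 := by
  rw [coeff_laguerre, if_neg h.not_ge]

theorem coeff_laguerre_add (α : ℝ) (k d : ℕ) :
    (laguerre α (k + d)).coeff k =
      (-1) ^ k * (∏ i ∈ range d, (α + (k + 1 + i : ℕ))) / (d ! * k !) := by
  rw [coeff_laguerre, if_pos (by omega), Nat.add_sub_cancel_left, ← Ico_add_one_right_eq_Icc,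
    prod_Ico_eq_prod_range, show k + d + 1 - (k + 1) = d by omega]

theorem laguerre_eq_C_mul_prod {α : ℝ} {n : ℕ} {r : ℕ → ℝ} (hr : StrictMonoOn r (Icc 1 n))
    (hroot : ∀ i ∈ Icc 1 n, (laguerre α n).IsRoot (r i)) :
    laguerre α n = C ((-1 : ℝ) ^ n / n !) * ∏ i ∈ Icc 1 n, (X - C (r i)) := by
  have hcoeff : (laguerre α n).coeff n = (-1) ^ n / n ! := by
    simpa using coeff_laguerre_add α n 0
  have hcoeff_ne : (laguerre α n).coeff n ≠ 0 := by
    rw [hcoeff]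
    exact div_ne_zero (pow_ne_zero _ (by norm_num)) (by positivity)
  have hdeg : (laguerre α n).natDegree = n :=
    natDegree_eq_of_le_of_coeff_ne_zero
      (natDegree_le_iff_coeff_eq_zero.2 fun k hk => coeff_laguerre_of_lt hk) hcoeff_ne
  have hne : laguerre α n ≠ 0 := fun h => hcoeff_ne (by rw [h, coeff_zero])
  have hlead : (laguerre α n).leadingCoeff = (-1) ^ n / n ! := by
    rw [leadingCoeff, hdeg, hcoeff]
  rw [← hlead]
  exact eq_C_leadingCoeff_mul_prod_X_sub_C hne hr.injOn hroot (by simp [hdeg])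

theorem laguerre_succ_eq_sub (α : ℝ) (n : ℕ) :
    laguerre α (n + 1) = laguerre (α + 1) (n + 1) - laguerre (α + 1) n := by
  ext k
  rw [coeff_sub]
  rcases lt_trichotomy k (n + 1) with hk | rfl | hk
  · obtain ⟨d, rfl⟩ := Nat.exists_eq_add_of_le (Nat.lt_succ_iff.mp hk)
    rw [show k + d + 1 = k + (d + 1) by ring, coeff_laguerre_add, coeff_laguerre_add,
      coeff_laguerre_add, prod_range_succ', prod_range_succ, factorial_succ d]
    have hprod : ∏ i ∈ range d, (α + (k + 1 + (i + 1) : ℕ)) =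
        ∏ i ∈ range d, (α + 1 + (k + 1 + i : ℕ)) :=
      prod_congr rfl fun i _ => by push_cast; ring
    rw [hprod]
    field_simp
    push_cast
    ring
  · simp [coeff_laguerre]
  · rw [coeff_laguerre_of_lt hk, coeff_laguerre_of_lt hk, coeff_laguerre_of_lt (by omega),
      sub_zero]

theorem derivative_laguerre_succ (α : ℝ) (n : ℕ) :
    derivative (laguerre α (n + 1)) = -laguerre (α + 1) n := by
  ext k
  rw [coeff_derivative, coeff_neg]
  rcases le_or_gt k n with hk | hk
  · obtain ⟨d, rfl⟩ := Nat.exists_eq_add_of_le hk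
    rw [show k + d + 1 = (k + 1) + d by ring, coeff_laguerre_add, coeff_laguerre_add,
      factorial_succ k]
    have hprod : ∏ i ∈ range d, (α + (k + 1 + 1 + i : ℕ)) =
        ∏ i ∈ range d, (α + 1 + (k + 1 + i : ℕ)) :=
      prod_congr rfl fun i _ => by push_cast; ring
    rw [hprod]
    field_simp
    push_cast
    ring
  · rw [coeff_laguerre_of_lt (by omega), coeff_laguerre_of_lt hk]
    simp

theorem X_mul_derivative_laguerre_succ (α : ℝ) (n : ℕ) :
    X * derivative (laguerre α (n + 1)) =
      C ((n : ℝ) + 1) * laguerre α (n + 1) - C ((n : ℝ) + 1 + α) * laguerre α n := by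
  ext k
  rw [coeff_X_mul_derivative, coeff_sub, coeff_C_mul, coeff_C_mul]
  rcases lt_trichotomy k (n + 1) with hk | rfl | hk
  · obtain ⟨d, rfl⟩ := Nat.exists_eq_add_of_le (Nat.lt_succ_iff.mp hk)
    rw [show k + d + 1 = k + (d + 1) by ring, coeff_laguerre_add, coeff_laguerre_add,
      prod_range_succ, factorial_succ d]
    field_simp
    push_cast
    ring
  · rw [coeff_laguerre_of_lt (Nat.lt_succ_self n)]
    push_cast
    ring
  · rw [coeff_laguerre_of_lt hk, coeff_laguerre_of_lt (by omega)]
    ring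

theorem X_mul_laguerre_add_one (α : ℝ) (n : ℕ) :
    X * laguerre (α + 1) n =
      C ((n : ℝ) + 1 + α) * laguerre α n - C ((n : ℝ) + 1) * laguerre α (n + 1) := by
  linear_combination X * derivative_laguerre_succ α n - X_mul_derivative_laguerre_succ α n

theorem laguerre_pair_shift (β : ℝ) (n : ℕ) (a b : ℝ[X]) :
    C ((n : ℝ) + 1 + β) * (a * laguerre β (n + 1) + b * laguerre β n) =
      (C ((n : ℝ) + 1 + β) * a + C ((n : ℝ) + 1) * b) * laguerre (β + 1) (n + 1) +
        (b * (X - C ((n : ℝ) + 1)) - C ((n : ℝ) + 1 + β) * a) * laguerre (β + 1) n := by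
  linear_combination (C ((n : ℝ) + 1 + β) * a + C ((n : ℝ) + 1) * b) * laguerre_succ_eq_sub β n -
    b * X_mul_laguerre_add_one β n

-- The cubic `p₃` of the statement.
noncomputable def laguerreCubic (α : ℝ) (n : ℕ) : ℝ[X] :=
  (X + C (α + 3)) * (X + C (α + 2)) * (X + C (α + 1)) - X * (X + C (α + 1)) * C (α + n + 3) -
    X * (X + C (α + 3)) * C (α + n + 2)

theorem ofReal_eval_laguerreCubic (α : ℝ) (n : ℕ) (s : ℝ) :
    (((laguerreCubic α n).eval s : ℝ) : ℂ) =
      ((s : ℂ) + (α : ℂ) + 3) * ((s : ℂ) + (α : ℂ) + 2) * ((s : ℂ) + (α : ℂ) + 1) -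
        (s : ℂ) * ((s : ℂ) + (α : ℂ) + 1) * ((α : ℂ) + (n : ℂ) + 3) -
        (s : ℂ) * ((s : ℂ) + (α : ℂ) + 3) * ((α : ℂ) + (n : ℂ) + 2) := by
  simp [laguerreCubic]
  ring

theorem laguerre_shift_four (α : ℝ) (n : ℕ) :
    C (((n : ℝ) + α + 2) * ((n : ℝ) + α + 3) * ((n : ℝ) + α + 4)) * laguerre α (n + 1) =
      (C ((α + 1) * (α + 2) * (α + 3)) - C (2 * ((n : ℝ) + 1) * (α + 2)) * X -
          C ((n : ℝ) + 1) * X ^ 2) * laguerre (α + 4) (n + 1) -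
        laguerreCubic α (n + 1) * laguerre (α + 4) n := by
  have h1 := laguerre_succ_eq_sub α n
  have h2 := laguerre_pair_shift (α + 1) n 1 (-1)
  have h3 := laguerre_pair_shift (α + 2) n (C (α + 1)) (-(X + C (α + 1)))
  have h4 := laguerre_pair_shift (α + 3) n (C ((α + 1) * (α + 2)) - C ((n : ℝ) + 1) * X)
    (-(X ^ 2 + C (α - n) * X + C ((α + 1) * (α + 2))))
  rw [show α + 1 + 1 = α + 2 by ring] at h2
  rw [show α + 2 + 1 = α + 3 by ring] at h3
  rw [show α + 3 + 1 = α + 4 by ring] at h4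
  simp only [laguerreCubic, map_add, map_mul, map_sub, map_one, map_ofNat, map_natCast,
    Nat.cast_add, Nat.cast_one] at h1 h2 h3 h4 ⊢
  linear_combination ((n + C α + 2) * (n + C α + 3) * (n + C α + 4) : ℝ[X]) * h1 +
    ((n + C α + 3) * (n + C α + 4) : ℝ[X]) * h2 + (n + C α + 4 : ℝ[X]) * h3 + h4

theorem exists_pos_eval_laguerre_eq_mul_derivative {α : ℝ} (hα : -1 < α) {n : ℕ} {t : ℝ}
    (hroot : (laguerre (α + 4) n).eval t = 0) (ht : 0 < t)
    (hcubic : 0 < (laguerreCubic α n).eval t) :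
    ∃ κ > 0, (laguerre α n).eval t = κ * (derivative (laguerre (α + 4) n)).eval t := by
  rcases n with _ | n
  · simp [laguerre] at hroot
  have hshift := congrArg (eval t) (laguerre_shift_four α n)
  have hderiv := congrArg (eval t) (X_mul_derivative_laguerre_succ (α + 4) n)
  simp only [eval_mul, eval_sub, eval_C, eval_X, eval_pow, hroot, mul_zero, zero_sub]
    at hshift hderiv
  have hn := n.cast_nonneg (α := ℝ)
  set K := ((n : ℝ) + 1 + α + 4) * (((n : ℝ) + α + 2) * ((n : ℝ) + α + 3) * ((n : ℝ) + α + 4))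
  have hK : 0 < K :=
    mul_pos (by linarith) (mul_pos (mul_pos (by linarith) (by linarith)) (by linarith))
  refine ⟨(laguerreCubic α (n + 1)).eval t * t / K, by positivity, ?_⟩
  field_simp
  linear_combination ((n : ℝ) + 1 + α + 4) * hshift -
    (laguerreCubic α (n + 1)).eval t * hderiv

theorem laguerre_interlacing_equal_deg_param_four_general
    (α : ℝ) (hα : -1 < α) (n : ℕ)
    (x : ℕ → ℝ)
    (hxmono : ∀ i ∈ Finset.Icc 1 n, ∀ j ∈ Finset.Icc 1 n, i < j → x i < x j)
    (hxroots : ∀ t : ℝ, (laguerre α n).eval t = 0 ↔ ∃ i ∈ Finset.Icc 1 n, x i = t)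
    (w : ℕ → ℝ)
    (hwpos : ∀ i ∈ Finset.Icc 1 n, 0 < w i)
    (hwmono : ∀ i ∈ Finset.Icc 1 n, ∀ j ∈ Finset.Icc 1 n, i < j → w i < w j)
    (hwroots : ∀ t : ℝ, (laguerre (α + 4) n).eval t = 0 ↔ ∃ i ∈ Finset.Icc 1 n, w i = t)
    (hp3 : ∃ l₁ l₂ l₃ : ℂ,
      (∀ z : ℂ,
          (z + (α : ℂ) + 3) * (z + (α : ℂ) + 2) * (z + (α : ℂ) + 1) -
              z * (z + (α : ℂ) + 1) * ((α : ℂ) + (n : ℂ) + 3) -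
              z * (z + (α : ℂ) + 3) * ((α : ℂ) + (n : ℂ) + 2) =
            (z - l₁) * (z - l₂) * (z - l₃)) ∧
        l₁.im = 0 ∧ l₁.re < w 1 ∧
        ((l₂.im = 0 ∧ l₂.re < 0) ∨ l₂.im ≠ 0) ∧
        ((l₃.im = 0 ∧ l₃.re < 0) ∨ l₃.im ≠ 0)) :
    ∀ i ∈ Finset.Icc 1 n, x i < w i ∧ (i < n → w i < x (i + 1)) := by
  obtain ⟨l₁, l₂, l₃, hfac, hl₁, hl₁w, hl₂, hl₃⟩ := hp3
  have hcubic : ∀ k ∈ Icc 1 n, 0 < (laguerreCubic α n).eval (w k) := fun k hk => by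
    obtain ⟨h1k, hkn⟩ := mem_Icc.1 hk
    have hw₁ : w 1 ≤ w k :=
      StrictMonoOn.monotoneOn hwmono (mem_Icc.2 ⟨le_rfl, h1k.trans hkn⟩) hk h1k
    exact pos_of_ofReal_eq_prod_sub (fun s => (ofReal_eval_laguerreCubic α n s).trans (hfac s))
      hl₁ hl₂ hl₃ (hl₁w.trans_le hw₁) (hwpos k hk).le
  refine interlace_of_eval_eq_pos_mul_eval_derivative hxmono hwmono
    (div_ne_zero (pow_ne_zero _ (by norm_num)) (by positivity))
    (laguerre_eq_C_mul_prod hxmono fun i hi => (hxroots _).2 ⟨i, hi, rfl⟩)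
    (laguerre_eq_C_mul_prod hwmono fun i hi => (hwroots _).2 ⟨i, hi, rfl⟩) fun k hk => ?_
  exact exists_pos_eval_laguerre_eq_mul_derivative hα ((hwroots _).2 ⟨k, hk, rfl⟩) (hwpos k hk)
    (hcubic k hk)

theorem laguerre_interlacing_equal_deg_param_four
    (α : ℝ) (hα : -1 < α) (n : ℕ) (hn : 3 ≤ n)
    (hnc : ∀ t : ℝ, ¬((laguerre (α + 4) n).eval t = 0 ∧ (laguerre α n).eval t = 0))
    (x : ℕ → ℝ)
    (hxpos : ∀ i ∈ Finset.Icc 1 n, 0 < x i)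
    (hxmono : ∀ i ∈ Finset.Icc 1 n, ∀ j ∈ Finset.Icc 1 n, i < j → x i < x j)
    (hxroots : ∀ t : ℝ, (laguerre α n).eval t = 0 ↔ ∃ i ∈ Finset.Icc 1 n, x i = t)
    (w : ℕ → ℝ)
    (hwpos : ∀ i ∈ Finset.Icc 1 n, 0 < w i)
    (hwmono : ∀ i ∈ Finset.Icc 1 n, ∀ j ∈ Finset.Icc 1 n, i < j → w i < w j)
    (hwroots : ∀ t : ℝ, (laguerre (α + 4) n).eval t = 0 ↔ ∃ i ∈ Finset.Icc 1 n, w i = t)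
    (hp3 : ∃ l₁ l₂ l₃ : ℂ,
      (∀ z : ℂ,
          (z + (α : ℂ) + 3) * (z + (α : ℂ) + 2) * (z + (α : ℂ) + 1) -
              z * (z + (α : ℂ) + 1) * ((α : ℂ) + (n : ℂ) + 3) -
              z * (z + (α : ℂ) + 3) * ((α : ℂ) + (n : ℂ) + 2) =
            (z - l₁) * (z - l₂) * (z - l₃)) ∧
        l₁.im = 0 ∧ l₁.re < w 1 ∧
        ((l₂.im = 0 ∧ l₂.re < 0) ∨ l₂.im ≠ 0) ∧
        ((l₃.im = 0 ∧ l₃.re < 0) ∨ l₃.im ≠ 0)) :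
    ∀ i ∈ Finset.Icc 1 n, x i < w i ∧ (i < n → w i < x (i + 1)) :=
  laguerre_interlacing_equal_deg_param_four_general α hα n x hxmono hxroots w hwpos hwmono hwroots
    hp3
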